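/- Let N ≥ 2, κ > 0, α ∈ ℝ, and let V_1,…,V_N : (0,∞) → ℝ be continuous. Suppose for each j there are twice continuously differentiable functions u_j, v_j on [0,∞) satisfying −u_j'' + V_j u_j = −κ² u_j and −v_j'' + V_j v_j = −κ² v_j on (0,∞), with u_j(0) = 0, v_j(0) ≠ 0, v_j ∈ L²((0,∞)), and such that the Wronskian W_j := u_j v_j' − u_j' v_j is a (necessarily constant) nonzero number. Put M := Σ_{j=1}^N v_j'(0)/v_j(0) and assume α − M ≠ 0. Define G_{jℓ}(x,y) := δ_{jℓ}·(−u_j(min(x,y))·v_j(max(x,y))/W_j) + v_j(x)·v_ℓ(y)/(v_j(0)·v_ℓ(0)·(α−M)). Then for any continuous compactly supported f_1,…,f_N : (0,∞) → ℝ, the functions w_j(x) := Σ_{ℓ=1}^N ∫₀^∞ G_{jℓ}(x,y) f_ℓ(y) dy satisfy: (i) w_j is continuously differentiable on [0,∞), twice differentiable on (0,∞), and −w_j''(x) + V_j(x)·w_j(x) + κ²·w_j(x) = f_j(x) for all x > 0; (ii) w_1(0) = ⋯ = w_N(0); (iii) Σ_{j=1}^N w_j'(0) = α·w_1(0); (iv)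 each w_j ∈ L²((0,∞)). (This is the content of the paper's Lemma giving, via Krein's formula, the resolvent kernel of H_α(V) on the star graph at energy k² = −κ².) -/

import Mathlib

/-!
On each half-line, `u` and `v` solve `ψ'' = (V + κ²) ψ` with constant Wronskian `W`, so variation
of constants turns the diagonal part of the kernel into
`φ(x) = -(v(x) ∫₀ˣ u f + u(x) ∫ₓ^∞ v f) / W`. Differentiating, the terms produced by the integrals
cancel the first time and add up to `-f` (by the Wronskian) the second time, so
`φ'' = (V + κ²) φ - f`, with `φ(0) = 0` and `φ'(0) = ∫ v f / v(0)`. The rank-one part of the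
kernel adds `c_j v_j` with `c_j v_j(0) = S / (α - M)` for every `j`, where
`S = Σ_ℓ ∫ v_ℓ f_ℓ / v_ℓ(0)`; this is the continuity at the vertex, and the sum of the outgoing
derivatives is `S + M S / (α - M) = α S / (α - M)`. Beyond the support of `f`, `φ` is a multiple
of `v`, hence square integrable.
-/

open MeasureTheory Set Real

lemma ContinuousOn.integrableOn_mul_of_hasCompactSupport {g f : ℝ → ℝ} {s : Set ℝ}
    (hg : ContinuousOn g s) (hs : IsClosed s) (hf : Continuous f) (hfs : HasCompactSupport f) :
    IntegrableOn (fun y => g y * f y) s := by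
  have hK : IntegrableOn (fun y => g y * f y) (s ∩ tsupport f) :=
    ((hg.mul hf.continuousOn).mono inter_subset_left).integrableOn_compact
      (hfs.isCompact.inter_left hs)
  refine hK.of_forall_sdiff_eq_zero hs.measurableSet fun y hy => ?_
  rw [image_eq_zero_of_notMem_tsupport fun h => hy.2 ⟨hy.1, h⟩, mul_zero]

lemma memLp_two_restrict_Ioi_of_continuousOn_of_vanishing {g : ℝ → ℝ} {a R : ℝ}
    (hg : ContinuousOn g (Ici a)) (hR : ∀ x, R < x → g x = 0) :
    MemLp g 2 (volume.restrict (Ioi a)) := by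
  rw [memLp_two_iff_integrable_sq
    ((hg.mono Ioi_subset_Ici_self).aestronglyMeasurable measurableSet_Ioi)]
  have hK : IntegrableOn (fun x => g x ^ 2) (Icc a R) :=
    ((hg.pow 2).mono Icc_subset_Ici_self).integrableOn_compact isCompact_Icc
  refine hK.of_forall_sdiff_eq_zero measurableSet_Ioi fun x hx => ?_
  have hxR : R < x := lt_of_not_ge fun h => hx.2 ⟨le_of_lt hx.1, h⟩
  rw [hR x hxR, sq, mul_zero]

lemma hasDerivWithinAt_intervalIntegral_Ici {g : ℝ → ℝ} {a x : ℝ} (hg : ContinuousOn g (Ici a))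
    (hx : x ∈ Ici a) : HasDerivWithinAt (fun y => ∫ t in a..y, g t) (g x) (Ici a) x := by
  have hext : Continuous fun t => g (max a t) :=
    hg.comp_continuous (continuous_const.max continuous_id) fun t => le_max_left a t
  have hagree : ∀ y ∈ Ici a, (∫ t in a..y, g (max a t)) = ∫ t in a..y, g t := fun y hy =>
    intervalIntegral.integral_congr fun t ht => by
      rw [uIcc_of_le hy] at ht
      rw [max_eq_right ht.1]
  have h := (hext.integral_hasStrictDerivAt a x).hasDerivAt.hasDerivWithinAt (s := Ici a)
  rw [max_eq_right hx] at h
  exact h.congr (fun y hy => (hagree y hy).symm) (hagree x hx).symm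

lemma hasDerivWithinAt_integral_Ioi {g : ℝ → ℝ} {a x : ℝ} (hgi : IntegrableOn g (Ioi a))
    (hg : ContinuousOn g (Ici a)) (hx : x ∈ Ici a) :
    HasDerivWithinAt (fun y => ∫ t in Ioi y, g t) (-g x) (Ici a) x := by
  have htail : ∀ y ∈ Ici a, (∫ t in Ioi y, g t) = (∫ t in Ioi a, g t) - ∫ t in a..y, g t :=
    fun y hy => eq_sub_of_add_eq' <| intervalIntegral.integral_interval_add_Ioi hgi
      (hgi.mono_set (Ioi_subset_Ioi hy))
  have h := (hasDerivWithinAt_intervalIntegral_Ici hg hx).const_sub (∫ t in Ioi a, g t)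
  exact h.congr htail (htail x hx)

lemma integral_Ioi_mul_min_max {u v f : ℝ → ℝ} {a x : ℝ} (hx : a ≤ x)
    (hu : IntegrableOn (fun y => u y * f y) (Ioi a))
    (hv : IntegrableOn (fun y => v y * f y) (Ioi a)) :
    ∫ y in Ioi a, u (min x y) * v (max x y) * f y
      = v x * (∫ y in a..x, u y * f y) + u x * ∫ y in Ioi x, v y * f y := by
  have hleft : EqOn (fun y => u (min x y) * v (max x y) * f y) (fun y => v x * (u y * f y))
      (Ioc a x) :=
    fun y hy => by simp only [min_eq_right hy.2, max_eq_left hy.2]; ring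
  have hright : EqOn (fun y => u (min x y) * v (max x y) * f y) (fun y => u x * (v y * f y))
      (Ioi x) :=
    fun y hy => by simp only [min_eq_left (mem_Ioi.1 hy).le, max_eq_right (mem_Ioi.1 hy).le]; ring
  have hu' : IntegrableOn (fun y => v x * (u y * f y)) (Ioc a x) :=
    (hu.mono_set Ioc_subset_Ioi_self).const_mul (v x)
  have hv' : IntegrableOn (fun y => u x * (v y * f y)) (Ioi x) :=
    (hv.mono_set (Ioi_subset_Ioi hx)).const_mul (u x)
  rw [← Ioc_union_Ioi_eq_Ioi hx, setIntegral_union Ioc_disjoint_Ioi_same measurableSet_Ioi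
    (hu'.congr_fun hleft.symm measurableSet_Ioc) (hv'.congr_fun hright.symm measurableSet_Ioi),
    setIntegral_congr_fun measurableSet_Ioc hleft, setIntegral_congr_fun measurableSet_Ioi hright,
    integral_const_mul, integral_const_mul, intervalIntegral.integral_of_le hx]

/-- With `(a, b) = (u, v)` this is the Dirichlet resolvent kernel `-u(x ∧ y) v(x ∨ y) / W` applied
to `f` (see `integral_Ioi_mul_min_max`); with `(a, b) = (u', v')` it is its derivative. -/
noncomputable def variationOfConstants (a b u v f : ℝ → ℝ) (W x : ℝ) : ℝ :=
  -(b x * (∫ t in (0:ℝ)..x, u t * f t) + a x * ∫ t in Ioi x, v t * f t) / W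

section HalfLine

variable {u u' u'' v v' v'' f : ℝ → ℝ} {W : ℝ}

lemma hasDerivWithinAt_variationOfConstants {a a' b b' : ℝ → ℝ} {x : ℝ} (hx : x ∈ Ici 0)
    (hu : ContinuousOn u (Ici 0)) (hv : ContinuousOn v (Ici 0)) (hf : Continuous f)
    (hfs : HasCompactSupport f) (ha : HasDerivWithinAt a (a' x) (Ici 0) x)
    (hb : HasDerivWithinAt b (b' x) (Ici 0) x) :
    HasDerivWithinAt (variationOfConstants a b u v f W)
      (variationOfConstants a' b' u v f W x - (b x * u x - a x * v x) * f x / W) (Ici 0) x := by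
  have hA := hasDerivWithinAt_intervalIntegral_Ici (g := fun t => u t * f t)
    (hu.mul hf.continuousOn) hx
  have hB := hasDerivWithinAt_integral_Ioi
    ((hv.integrableOn_mul_of_hasCompactSupport isClosed_Ici hf hfs).mono_set Ioi_subset_Ici_self)
    (hv.mul hf.continuousOn) hx
  refine (((hb.fun_mul hA).fun_add (ha.fun_mul hB)).fun_neg.div_const W).congr_deriv ?_
  simp only [variationOfConstants]
  ring

lemma continuousOn_variationOfConstants {a b : ℝ → ℝ} (ha : ContinuousOn a (Ici 0))
    (hb : ContinuousOn b (Ici 0)) (hu : ContinuousOn u (Ici 0)) (hv : ContinuousOn v (Ici 0))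
    (hf : Continuous f) (hfs : HasCompactSupport f) :
    ContinuousOn (variationOfConstants a b u v f W) (Ici 0) := by
  intro x hx
  have hA := (hasDerivWithinAt_intervalIntegral_Ici (g := fun t => u t * f t)
    (hu.mul hf.continuousOn) hx).continuousWithinAt
  have hB := (hasDerivWithinAt_integral_Ioi
    ((hv.integrableOn_mul_of_hasCompactSupport isClosed_Ici hf hfs).mono_set Ioi_subset_Ici_self)
    (hv.mul hf.continuousOn) hx).continuousWithinAt
  exact (((hb x hx).mul hA).add ((ha x hx).mul hB)).neg.div_const W

lemma memLp_variationOfConstants (hu : ContinuousOn u (Ici 0)) (hv : ContinuousOn v (Ici 0))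
    (hf : Continuous f) (hfs : HasCompactSupport f) (hvL2 : MemLp v 2 (volume.restrict (Ioi 0))) :
    MemLp (variationOfConstants u v u v f W) 2 (volume.restrict (Ioi 0)) := by
  obtain ⟨R, hR⟩ := hfs.isCompact.bddAbove
  have huf := hu.integrableOn_mul_of_hasCompactSupport isClosed_Ici hf hfs
  have hfar : ∀ x, max R 0 < x → variationOfConstants u v u v f W x
      = -((∫ t in Ioi 0, u t * f t) / W) * v x := by
    intro x hx
    have htail : ∀ g : ℝ → ℝ, ∫ t in Ioi x, g t * f t = 0 := fun g =>
      setIntegral_eq_zero_of_forall_eq_zero fun t ht => by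
        rw [image_eq_zero_of_notMem_tsupport fun h => (hR h).not_gt
          ((le_max_left R 0).trans_lt (hx.trans ht)), mul_zero]
    have hsplit := intervalIntegral.integral_interval_add_Ioi (huf.mono_set Ioi_subset_Ici_self)
      (huf.mono_set (Ioi_subset_Ici ((le_max_right R 0).trans hx.le)))
    rw [htail, add_zero] at hsplit
    simp only [variationOfConstants, hsplit, htail]
    ring
  have hcont : ContinuousOn (fun x => variationOfConstants u v u v f W x
      + (∫ t in Ioi 0, u t * f t) / W * v x) (Ici 0) :=
    (continuousOn_variationOfConstants hu hv hu hv hf hfs).add (continuousOn_const.mul hv)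
  have hψ := memLp_two_restrict_Ioi_of_continuousOn_of_vanishing hcont (R := max R 0) fun x hx => by
    rw [hfar x hx]; ring
  convert hψ.sub (hvL2.const_mul ((∫ t in Ioi 0, u t * f t) / W)) using 1
  ext x; simp

theorem variationOfConstants_add_mul_solution {q w : ℝ → ℝ} (c : ℝ)
    (hu1 : ∀ x ∈ Ici (0:ℝ), HasDerivWithinAt u (u' x) (Ici 0) x)
    (hu2 : ∀ x ∈ Ici (0:ℝ), HasDerivWithinAt u' (u'' x) (Ici 0) x)
    (hv1 : ∀ x ∈ Ici (0:ℝ), HasDerivWithinAt v (v' x) (Ici 0) x)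
    (hv2 : ∀ x ∈ Ici (0:ℝ), HasDerivWithinAt v' (v'' x) (Ici 0) x)
    (hueq : ∀ x ∈ Ioi (0:ℝ), u'' x = q x * u x) (hveq : ∀ x ∈ Ioi (0:ℝ), v'' x = q x * v x)
    (hu0 : u 0 = 0) (hvL2 : MemLp v 2 (volume.restrict (Ioi 0)))
    (hW : ∀ x ∈ Ici (0:ℝ), u x * v' x - u' x * v x = W) (hWne : W ≠ 0)
    (hf : Continuous f) (hfs : HasCompactSupport f)
    (hw : ∀ x ∈ Ici (0:ℝ), w x = variationOfConstants u v u v f W x + c * v x) :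
    ∃ w' : ℝ → ℝ,
      (∀ x ∈ Ici (0:ℝ), HasDerivWithinAt w (w' x) (Ici 0) x) ∧ ContinuousOn w' (Ici 0) ∧
      (∀ x ∈ Ioi (0:ℝ), HasDerivAt w' (q x * w x - f x) x) ∧ w 0 = c * v 0 ∧
      w' 0 = (∫ y in Ioi 0, v y * f y) / v 0 + c * v' 0 ∧ MemLp w 2 (volume.restrict (Ioi 0)) := by
  have huc : ContinuousOn u (Ici 0) := fun x hx => (hu1 x hx).continuousWithinAt
  have hvc : ContinuousOn v (Ici 0) := fun x hx => (hv1 x hx).continuousWithinAt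
  have hu'c : ContinuousOn u' (Ici 0) := fun x hx => (hu2 x hx).continuousWithinAt
  have hv'c : ContinuousOn v' (Ici 0) := fun x hx => (hv2 x hx).continuousWithinAt
  refine ⟨fun x => variationOfConstants u' v' u v f W x + c * v' x, fun x hx => ?_,
    (continuousOn_variationOfConstants hu'c hv'c huc hvc hf hfs).add (continuousOn_const.mul hv'c),
    fun x hx => ?_, ?_, ?_, ?_⟩
  · have h := (hasDerivWithinAt_variationOfConstants (W := W) hx huc hvc hf hfs (hu1 x hx)
      (hv1 x hx)).fun_add ((hv1 x hx).const_mul c)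
    exact (h.congr_deriv (by ring)).congr hw (hw x hx)
  · have hx0 : x ∈ Ici (0:ℝ) := Ioi_subset_Ici_self hx
    have h := ((hasDerivWithinAt_variationOfConstants (W := W) hx0 huc hvc hf hfs (hu2 x hx0)
      (hv2 x hx0)).fun_add ((hv2 x hx0).const_mul c)).hasDerivAt (Ici_mem_nhds hx)
    refine h.congr_deriv ?_
    have hWx : v' x * u x - u' x * v x = W := by linarith [hW x hx0]
    simp only [variationOfConstants, hueq x hx, hveq x hx, hw x hx0, hWx]
    field_simp
    ring
  · simp [hw 0 self_mem_Ici, variationOfConstants, hu0]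
  · have hW0 : u' 0 * v 0 = -W := by
      have h := hW 0 self_mem_Ici
      rw [hu0, zero_mul] at h
      linarith
    have hv0 : v 0 ≠ 0 := fun h => hWne (by simpa [h] using hW0.symm)
    have hu'0 : u' 0 = -W / v 0 := by rw [eq_div_iff hv0, hW0]
    simp only [variationOfConstants, intervalIntegral.integral_same, hu'0]
    field_simp
    ring
  · refine ((memLp_variationOfConstants (W := W) huc hvc hf hfs hvL2).add
      (hvL2.const_mul c)).ae_eq ?_
    filter_upwards [ae_restrict_mem measurableSet_Ioi] with x hx
    exact (hw x (Ioi_subset_Ici_self hx)).symm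

end HalfLine

lemma sum_integral_starKernel {ι : Type*} [Fintype ι] [DecidableEq ι] {u v f : ι → ℝ → ℝ}
    {W : ι → ℝ} {D x : ℝ} (j : ι) (hx : x ∈ Ici 0) (hu : ContinuousOn (u j) (Ici 0))
    (hv : ∀ ℓ, ContinuousOn (v ℓ) (Ici 0)) (hf : ∀ ℓ, Continuous (f ℓ))
    (hfs : ∀ ℓ, HasCompactSupport (f ℓ)) :
    ∑ ℓ, ∫ y in Ioi (0:ℝ), ((if j = ℓ then 1 else 0) * (-(u j (min x y) * v j (max x y)) / W j)
        + v j x * v ℓ y / (v j 0 * v ℓ 0 * D)) * f ℓ y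
      = variationOfConstants (u j) (v j) (u j) (v j) (f j) (W j) x
        + (∑ ℓ, (∫ y in Ioi 0, v ℓ y * f ℓ y) / v ℓ 0) / (v j 0 * D) * v j x := by
  have hvf : ∀ ℓ, IntegrableOn (fun y => v ℓ y * f ℓ y) (Ioi 0) := fun ℓ =>
    ((hv ℓ).integrableOn_mul_of_hasCompactSupport isClosed_Ici (hf ℓ) (hfs ℓ)).mono_set
      Ioi_subset_Ici_self
  have huf : IntegrableOn (fun y => u j y * f j y) (Ioi 0) :=
    (hu.integrableOn_mul_of_hasCompactSupport isClosed_Ici (hf j) (hfs j)).mono_set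
      Ioi_subset_Ici_self
  have hkernel : IntegrableOn (fun y => u j (min x y) * v j (max x y) * f j y) (Ioi 0) := by
    have hmin : ContinuousOn (fun y => u j (min x y)) (Ici 0) :=
      hu.comp (continuous_const.min continuous_id).continuousOn fun _ hy => mem_Ici.2 (le_min hx hy)
    have hmax : ContinuousOn (fun y => v j (max x y)) (Ici 0) :=
      (hv j).comp (continuous_const.max continuous_id).continuousOn fun _ _ =>
        mem_Ici.2 (hx.trans (le_max_left _ _))
    exact ((hmin.fun_mul hmax).integrableOn_mul_of_hasCompactSupport isClosed_Ici (hf j)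
      (hfs j)).mono_set Ioi_subset_Ici_self
  have hterm : ∀ ℓ, ∫ y in Ioi (0:ℝ), ((if j = ℓ then 1 else 0)
        * (-(u j (min x y) * v j (max x y)) / W j) + v j x * v ℓ y / (v j 0 * v ℓ 0 * D)) * f ℓ y
      = (if j = ℓ then variationOfConstants (u j) (v j) (u j) (v j) (f j) (W j) x else 0)
        + v j x / (v j 0 * D) * ((∫ y in Ioi 0, v ℓ y * f ℓ y) / v ℓ 0) := by
    intro ℓ
    split_ifs with hjℓ
    · subst hjℓ
      rw [setIntegral_congr_fun measurableSet_Ioi fun y _ => show _ = -1 / W j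
          * (u j (min x y) * v j (max x y) * f j y) + v j x / (v j 0 * v j 0 * D) * (v j y * f j y)
          by ring,
        integral_add (hkernel.const_mul _) ((hvf j).const_mul _), integral_const_mul,
        integral_const_mul, integral_Ioi_mul_min_max hx huf (hvf j)]
      simp only [variationOfConstants]
      ring
    · rw [setIntegral_congr_fun measurableSet_Ioi fun y _ => show _ = v j x / (v j 0 * v ℓ 0 * D)
          * (v ℓ y * f ℓ y) by ring, integral_const_mul]
      ring
  rw [Finset.sum_congr rfl fun ℓ _ => hterm ℓ, Finset.sum_add_distrib, Finset.sum_ite_eq,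
    ← Finset.mul_sum]
  simp only [Finset.mem_univ, if_true]
  ring

/-- Krein-formula resolvent kernel of `H_α(V)` on the star graph of `N`
half-lines at energy `−κ²`: for each link one is given solutions `u_j`
(vanishing at the vertex) and `v_j` (square-integrable at infinity) of
`−ψ'' + V_jψ = −κ²ψ`, with constant nonzero Wronskian `W_j`; the kernel is
`G_{jℓ}(x,y) = δ_{jℓ}·(−u_j(x∧y)v_j(x∨y)/W_j) + v_j(x)v_ℓ(y)/(v_j(0)v_ℓ(0)(α−M))`
with `M = Σ_j v_j'(0)/v_j(0)`.  Applied to continuous compactly supported data,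
it produces `C¹` functions on `[0,∞)` solving `−w'' + V w + κ²w = f` on `(0,∞)`,
obeying the δ vertex conditions with parameter `α`, and lying in `L²((0,∞))`. -/
theorem starKernel_resolvent
    (N : ℕ) (hN : 2 ≤ N) (κ α : ℝ)
    (V : Fin N → ℝ → ℝ)
    (u u' u'' v v' v'' : Fin N → ℝ → ℝ) (W : Fin N → ℝ)
    -- u is C² on [0,∞) with second derivative u''
    (hu1 : ∀ j, ∀ x ∈ Ici (0:ℝ), HasDerivWithinAt (u j) (u' j x) (Ici 0) x)
    (hu2 : ∀ j, ∀ x ∈ Ici (0:ℝ), HasDerivWithinAt (u' j) (u'' j x) (Ici 0) x)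
    -- v is C² on [0,∞) with second derivative v''
    (hv1 : ∀ j, ∀ x ∈ Ici (0:ℝ), HasDerivWithinAt (v j) (v' j x) (Ici 0) x)
    (hv2 : ∀ j, ∀ x ∈ Ici (0:ℝ), HasDerivWithinAt (v' j) (v'' j x) (Ici 0) x)
    -- the differential equations −ψ'' + V_jψ = −κ²ψ on (0,∞)
    (hueq : ∀ j, ∀ x ∈ Ioi (0:ℝ), -(u'' j x) + V j x * u j x = -(κ ^ 2) * u j x)
    (hveq : ∀ j, ∀ x ∈ Ioi (0:ℝ), -(v'' j x) + V j x * v j x = -(κ ^ 2) * v j x)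
    -- boundary behavior
    (hu0 : ∀ j, u j 0 = 0) (hv0 : ∀ j, v j 0 ≠ 0)
    (hvL2 : ∀ j, MemLp (v j) 2 (volume.restrict (Ioi 0)))
    -- constant nonzero Wronskian
    (hW : ∀ j, ∀ x ∈ Ici (0:ℝ), u j x * v' j x - u' j x * v j x = W j)
    (hWne : ∀ j, W j ≠ 0)
    -- α avoids the pole M = Σ_j v_j'(0)/v_j(0)
    (hαM : α - (∑ m, v' m 0 / v m 0) ≠ 0)
    -- data and the resolvent candidate
    (f : Fin N → ℝ → ℝ)
    (hfc : ∀ j, Continuous (f j)) (hfs : ∀ j, HasCompactSupport (f j))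
    (w : Fin N → ℝ → ℝ)
    (hw : ∀ j x, w j x = ∑ ℓ, ∫ y in Ioi (0:ℝ),
        ((if j = ℓ then 1 else 0) * (-(u j (min x y) * v j (max x y)) / W j)
          + v j x * v ℓ y / (v j 0 * v ℓ 0 * (α - ∑ m, v' m 0 / v m 0))) * f ℓ y) :
    ∃ w' : Fin N → ℝ → ℝ,
      (∀ j, ∀ x ∈ Ici (0:ℝ), HasDerivWithinAt (w j) (w' j x) (Ici 0) x) ∧
      (∀ j, ContinuousOn (w' j) (Ici 0)) ∧
      (∀ j, ∀ x ∈ Ioi (0:ℝ),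
        HasDerivAt (w' j) (V j x * w j x + κ ^ 2 * w j x - f j x) x) ∧
      (∀ j, w j 0 = w ⟨0, by omega⟩ 0) ∧
      ((∑ j, w' j 0) = α * w ⟨0, by omega⟩ 0) ∧
      (∀ j, MemLp (w j) 2 (volume.restrict (Ioi 0))) := by
  set M := ∑ m, v' m 0 / v m 0
  set S := ∑ ℓ, (∫ y in Ioi 0, v ℓ y * f ℓ y) / v ℓ 0
  choose w' hderiv hcont hderiv2 hvertex hvertex' hL2 using fun j =>
    variationOfConstants_add_mul_solution (q := fun x => V j x + κ ^ 2) (S / (v j 0 * (α - M)))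
      (hu1 j) (hu2 j) (hv1 j) (hv2 j) (fun x hx => by linear_combination -hueq j x hx)
      (fun x hx => by linear_combination -hveq j x hx) (hu0 j) (hvL2 j) (hW j) (hWne j) (hfc j)
      (hfs j) fun x hx => (hw j x).trans <| sum_integral_starKernel j hx
        (fun y hy => (hu1 j y hy).continuousWithinAt)
        (fun ℓ y hy => (hv1 ℓ y hy).continuousWithinAt) hfc hfs
  have hw0 : ∀ j, w j 0 = S / (α - M) := fun j => by
    rw [hvertex j]
    field_simp [hv0 j]
  refine ⟨w', hderiv, hcont, fun j x hx => (hderiv2 j x hx).congr_deriv (by ring),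
    fun j => by rw [hw0, hw0], ?_, hL2⟩
  calc ∑ j, w' j 0
        = ∑ j, ((∫ y in Ioi 0, v j y * f j y) / v j 0 + S / (α - M) * (v' j 0 / v j 0)) :=
          Finset.sum_congr rfl fun j _ => by rw [hvertex' j]; field_simp
      _ = S + S / (α - M) * M := by rw [Finset.sum_add_distrib, ← Finset.mul_sum]
      _ = α * w ⟨0, by omega⟩ 0 := by
          rw [hw0]
          field_simp
          ring
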